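/- Let s be a positive integer and define Π(x) = ∏_{i=1}^{2s} sin((x - y_i)/2) where y_i = π + π/(2s) - i·π/s for i = 1,…,2s. Then the maximum of |Π(x)| over x ∈ ℝ equals 1/2^{2s-1}. -/

import Mathlib

/-!
For real `t`, `|sin t| = |1 - e^{2it}| / 2`. Applied to the equidistant angles `θ + kπ/n`, the
numbers `e^{2i(θ + kπ/n)}` are `ζ^k z` with `ζ` a primitive `n`-th root of unity and `z = e^{2iθ}`,
and `∏ₖ (1 - ζ^k z) = 1 - z^n` turns the product back into a single sine:
`|∏ₖ sin (θ + kπ/n)| = |sin (nθ)| / 2^(n-1)`. With `n = 2s` this gives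
`|Π x| = |sin (s x - sπ + π/2)| / 2^(2s-1)`, whose maximum `1 / 2^(2s-1)` is attained at `x = π`.
-/

open Real

theorem IsPrimitiveRoot.prod_one_sub_pow_mul {R : Type*} [CommRing R] [IsDomain R] {ζ : R}
    {n : ℕ} (h : IsPrimitiveRoot ζ n) (hn : 0 < n) (z : R) :
    ∏ k ∈ Finset.range n, (1 - ζ ^ k * z) = 1 - z ^ n := by
  classical
  have : NeZero n := ⟨hn.ne'⟩
  have hroots : Polynomial.nthRootsFinset n (1 : R) = (Finset.range n).image (ζ ^ ·) := by
    ext μ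
    rw [Polynomial.mem_nthRootsFinset hn, Finset.mem_image]
    refine ⟨fun hμ => ?_, ?_⟩
    · obtain ⟨k, hk, rfl⟩ := h.eq_pow_of_pow_eq_one hμ
      exact ⟨k, Finset.mem_range.2 hk, rfl⟩
    rintro ⟨k, -, rfl⟩
    rw [← pow_mul, mul_comm, pow_mul, h.pow_eq_one, one_pow]
  have := h.pow_sub_pow_eq_prod_sub_mul 1 z hn
  rwa [one_pow, hroots, Finset.prod_image h.injOn_pow, eq_comm] at this

theorem Real.abs_sin_eq_norm_one_sub_exp (t : ℝ) :
    |sin t| = ‖1 - Complex.exp (2 * t * Complex.I)‖ / 2 := by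
  set e := Complex.exp (t * Complex.I)
  have he : e * Complex.exp (-t * Complex.I) = 1 := by
    rw [← Complex.exp_add, neg_mul, add_neg_cancel, Complex.exp_zero]
  have he2 : e * e = Complex.exp (2 * t * Complex.I) := by
    rw [← Complex.exp_add]; ring_nf
  have h : 1 - Complex.exp (2 * t * Complex.I) = e * (-2 * Complex.I * Complex.sin t) := by
    rw [Complex.sin]
    linear_combination he2 - he + (e * Complex.exp (-t * Complex.I) - e * e) * Complex.I_sq
  rw [h, norm_mul, Complex.norm_exp_ofReal_mul_I, norm_mul, ← Complex.ofReal_sin,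
    Complex.norm_real]
  simp

theorem Real.abs_prod_sin_add_mul_pi_div (n : ℕ) (hn : 0 < n) (θ : ℝ) :
    |∏ k ∈ Finset.range n, sin (θ + k * (π / n))| = |sin (n * θ)| / 2 ^ (n - 1) := by
  have hζ : IsPrimitiveRoot (Complex.exp (2 * π * Complex.I / n)) n :=
    Complex.isPrimitiveRoot_exp n hn.ne'
  have hfactor : ∀ k : ℕ, Complex.exp (2 * ↑(θ + k * (π / n)) * Complex.I)
      = Complex.exp (2 * π * Complex.I / n) ^ k * Complex.exp (2 * θ * Complex.I) := by
    intro k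
    rw [← Complex.exp_nat_mul, ← Complex.exp_add]
    congr 1
    push_cast
    ring
  have hpow : Complex.exp (2 * θ * Complex.I) ^ n = Complex.exp (2 * ↑(n * θ) * Complex.I) := by
    rw [← Complex.exp_nat_mul]
    push_cast
    ring_nf
  calc |∏ k ∈ Finset.range n, sin (θ + k * (π / n))|
      = ∏ k ∈ Finset.range n, ‖1 - Complex.exp (2 * ↑(θ + k * (π / n)) * Complex.I)‖ / 2 := by
        simp only [Finset.abs_prod, abs_sin_eq_norm_one_sub_exp]
    _ = ‖1 - Complex.exp (2 * ↑(n * θ) * Complex.I)‖ / 2 ^ n := by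
        rw [Finset.prod_div_distrib, ← norm_prod, Finset.prod_const, Finset.card_range]
        simp only [hfactor, hζ.prod_one_sub_pow_mul hn, hpow]
    _ = |sin (n * θ)| / 2 ^ (n - 1) := by
        rw [abs_sin_eq_norm_one_sub_exp, div_div, ← pow_succ', Nat.sub_add_cancel hn]

theorem max_abs_Pi (s : ℕ) (hs : 0 < s)
    (Pi' : ℝ → ℝ)
    (hPi : ∀ x : ℝ, Pi' x =
      ∏ i ∈ Finset.Icc 1 (2 * s), Real.sin ((x - (π + π / (2 * s) - i * π / s)) / 2)) :
    IsGreatest (Set.range fun x : ℝ => |Pi' x|) (1 / 2 ^ (2 * s - 1)) := by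
  have hs' : (s : ℝ) ≠ 0 := by positivity
  have habs (x : ℝ) :
      |Pi' x| = |sin (↑(2 * s) * (x / 2 - π / 2 + π / (4 * s)))| / 2 ^ (2 * s - 1) := by
    rw [hPi, ← abs_prod_sin_add_mul_pi_div (2 * s) (by omega), ← Finset.Ico_add_one_right_eq_Icc,
      Finset.prod_Ico_eq_prod_range, Nat.add_sub_cancel]
    congr 1
    refine Finset.prod_congr rfl fun k _ => congrArg sin ?_
    push_cast
    field_simp
    ring
  refine ⟨⟨π, ?_⟩, ?_⟩
  · have hπ : (↑(2 * s) : ℝ) * (π / 2 - π / 2 + π / (4 * s)) = π / 2 := by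
      push_cast
      field_simp
      ring
    simp only [habs, hπ, sin_pi_div_two, abs_one]
  · rintro _ ⟨x, rfl⟩
    simp only [habs]
    gcongr
    exact abs_sin_le_one _
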